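/- arXiv:1206.3926 — 2 statements merged into one kernel-verified Lean document; each statement's English description precedes it below -/
import Mathlib

section
/- Let Ω be a bounded open set in ℝ^N, N ≥ 2, and D = (d_ij) with d_ij ∈ L^∞(Ω), d_ij ≤ 0 a.e. for all i ≠ j. If the matrix D(x) is nonnegative definite for a.e. x in an open set Ω' ⊆ Ω (i.e. Σ_{i,j} d_ij(x) ξ_i ξ_j ≥ 0 for all ξ ∈ ℝ^m), then the maximum principle holds for −Δ + D in Ω': every U ∈ C¹(Ω̄';ℝ^m) with U ≤ 0 on ∂Ω' and −ΔU + DU ≤ 0 weakly in Ω' satisfies U ≤ 0 in Ω'. -/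
open MeasureTheory Real Set
open scoped RealInnerProductSpace ENNReal

noncomputable section

/-- Euclidean space `ℝ^N`. -/
abbrev EuclN (N : ℕ) := EuclideanSpace ℝ (Fin N)

/-- The Laplacian of a scalar function on `ℝ^N`. -/
def lap {N : ℕ} (u : EuclN N → ℝ) (x : EuclN N) : ℝ :=
  ∑ i : Fin N, iteratedFDeriv ℝ 2 u x ![EuclideanSpace.single i 1, EuclideanSpace.single i 1]

/-- Partial derivative `∂f/∂u_j` of `f(r, u)` with respect to the `j`-th `u`-variable. -/
def pd {m : ℕ} (f : ℝ → (Fin m → ℝ) → ℝ) (j : Fin m) (r : ℝ) (s : Fin m → ℝ) : ℝ :=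
  fderiv ℝ (f r) s (Pi.single j 1)

/-- `Ψ ∈ C^1_c(Ω'; ℝ^m)`. -/
def IsTestFun {N m : ℕ} (Ω' : Set (EuclN N)) (Ψ : Fin m → EuclN N → ℝ) : Prop :=
  ∀ i, ContDiff ℝ 1 (Ψ i) ∧ HasCompactSupport (Ψ i) ∧ tsupport (Ψ i) ⊆ Ω'

/-- The quadratic form `Q_U(Ψ; Ω')` of the linearized operator at a solution `U`. -/
def Qform {N m : ℕ} (f : Fin m → ℝ → (Fin m → ℝ) → ℝ) (U : Fin m → EuclN N → ℝ)
    (Ω' : Set (EuclN N)) (Ψ : Fin m → EuclN N → ℝ) : ℝ :=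
  ∫ x in Ω', ((∑ i, ‖gradient (Ψ i) x‖ ^ 2) -
    ∑ i, ∑ j, pd (f i) j ‖x‖ (fun k => U k x) * Ψ i x * Ψ j x)

/-- There is a `k`-dimensional subspace of `C^1_c(Ω'; ℝ^m)` on which `Q_U(·; Ω')`
is negative definite. -/
def NegDefFamily {N m : ℕ} (f : Fin m → ℝ → (Fin m → ℝ) → ℝ) (U : Fin m → EuclN N → ℝ)
    (Ω' : Set (EuclN N)) (k : ℕ) : Prop :=
  ∃ Ψ : Fin k → Fin m → EuclN N → ℝ,
    (∀ l, IsTestFun Ω' (Ψ l)) ∧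
    ∀ c : Fin k → ℝ, c ≠ 0 → Qform f U Ω' (fun i x => ∑ l, c l * Ψ l i x) < 0

/-- The semilinear system is cooperative (weakly coupled) in `Ω'`. -/
def CoopAlong {N m : ℕ} (f : Fin m → ℝ → (Fin m → ℝ) → ℝ) (Ω' : Set (EuclN N)) : Prop :=
  ∀ i j, i ≠ j → ∀ x ∈ Ω', ∀ s : Fin m → ℝ, 0 ≤ pd (f i) j ‖x‖ s

/-- The semilinear system is fully coupled along the solution `U` in `Ω'`. -/
def FullyCoupledAlong {N m : ℕ} (f : Fin m → ℝ → (Fin m → ℝ) → ℝ)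
    (U : Fin m → EuclN N → ℝ) (Ω' : Set (EuclN N)) : Prop :=
  CoopAlong f Ω' ∧
  ∀ I J : Finset (Fin m), I.Nonempty → J.Nonempty → Disjoint I J → I ∪ J = Finset.univ →
    ∃ i₀ ∈ I, ∃ j₀ ∈ J,
      0 < volume {x ∈ Ω' | 0 < pd (f i₀) j₀ ‖x‖ (fun k => U k x)}

/-- `Ω` is an open ball or annulus centered at the origin. -/
def IsBallOrAnnulus {N : ℕ} (Ω : Set (EuclN N)) : Prop :=
  (∃ R : ℝ, 0 < R ∧ Ω = Metric.ball (0 : EuclN N) R) ∨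
  (∃ r R : ℝ, 0 < r ∧ r < R ∧ Ω = {x : EuclN N | r < ‖x‖ ∧ ‖x‖ < R})

/-- The half-domain `Ω(e) = {x ∈ Ω : x·e > 0}`. -/
def halfDom {N : ℕ} (Ω : Set (EuclN N)) (e : EuclN N) : Set (EuclN N) :=
  {x ∈ Ω | 0 < ⟪x, e⟫}

/-- Reflection through the hyperplane `T(e) = {x : x·e = 0}`. -/
def reflPt {N : ℕ} (e x : EuclN N) : EuclN N := x - (2 * ⟪x, e⟫) • e

/-- `U` is foliated Schwarz symmetric on `Ω` with respect to the axis `p`. -/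
def FoliatedSchwarzWith {N m : ℕ} (Ω : Set (EuclN N)) (U : Fin m → EuclN N → ℝ)
    (p : EuclN N) : Prop :=
  ‖p‖ = 1 ∧ ∀ i, ∀ x ∈ Ω, ∀ y ∈ Ω, ‖x‖ = ‖y‖ → ⟪y, p⟫ ≤ ⟪x, p⟫ → U i y ≤ U i x

/-- `U` is foliated Schwarz symmetric on `Ω`. -/
def FoliatedSchwarz {N m : ℕ} (Ω : Set (EuclN N)) (U : Fin m → EuclN N → ℝ) : Prop :=
  ∃ p : EuclN N, FoliatedSchwarzWith Ω U p

/-- `U` is radial on `Ω`. -/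
def IsRadial {N m : ℕ} (Ω : Set (EuclN N)) (U : Fin m → EuclN N → ℝ) : Prop :=
  ∀ i, ∀ x ∈ Ω, ∀ y ∈ Ω, ‖x‖ = ‖y‖ → U i x = U i y

/-- `U` is a classical solution of `-Δu_i = f_i(|x|, U)` in `Ω`, `u_i = 0` on `∂Ω`. -/
def IsSolution {N m : ℕ} (Ω : Set (EuclN N)) (f : Fin m → ℝ → (Fin m → ℝ) → ℝ)
    (U : Fin m → EuclN N → ℝ) : Prop :=
  (∀ i, ∀ x ∈ Ω, -lap (U i) x = f i ‖x‖ (fun k => U k x)) ∧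
  (∀ i, ∀ x ∈ frontier Ω, U i x = 0)

/-- The bilinear form of the linear system `-ΔU + C(x) U`. -/
def BformL {N m : ℕ} (Ω' : Set (EuclN N)) (C : Fin m → Fin m → EuclN N → ℝ)
    (V Φ : Fin m → EuclN N → ℝ) : ℝ :=
  ∫ x in Ω', ((∑ i, ⟪gradient (V i) x, gradient (Φ i) x⟫) +
    ∑ i, ∑ j, C i j x * V i x * Φ j x)

/-- `-ΔU + D U ≥ 0` weakly in `Ω'`. -/
def WeakSuperSol {N m : ℕ} (Ω' : Set (EuclN N)) (D : Fin m → Fin m → EuclN N → ℝ)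
    (U : Fin m → EuclN N → ℝ) : Prop :=
  ∀ Ψ : Fin m → EuclN N → ℝ, IsTestFun Ω' Ψ → (∀ i x, 0 ≤ Ψ i x) →
    0 ≤ BformL Ω' D U Ψ

/-- `-ΔU + D U ≤ 0` weakly in `Ω'`. -/
def WeakSubSol {N m : ℕ} (Ω' : Set (EuclN N)) (D : Fin m → Fin m → EuclN N → ℝ)
    (U : Fin m → EuclN N → ℝ) : Prop :=
  ∀ Ψ : Fin m → EuclN N → ℝ, IsTestFun Ω' Ψ → (∀ i x, 0 ≤ Ψ i x) →
    BformL Ω' D U Ψ ≤ 0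

/-- The linear system with matrix `D` is cooperative in `Ω`: `d_ij ≤ 0` a.e. for `i ≠ j`. -/
def LinCoop {N m : ℕ} (Ω : Set (EuclN N)) (D : Fin m → Fin m → EuclN N → ℝ) : Prop :=
  ∀ i j, i ≠ j → ∀ᵐ x ∂(volume : Measure (EuclN N)), x ∈ Ω → D i j x ≤ 0

/-- The linear system with matrix `D` is fully coupled in `Ω`. -/
def LinFullyCoupled {N m : ℕ} (Ω : Set (EuclN N)) (D : Fin m → Fin m → EuclN N → ℝ) : Prop :=
  LinCoop Ω D ∧
  ∀ I J : Finset (Fin m), I.Nonempty → J.Nonempty → Disjoint I J → I ∪ J = Finset.univ →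
    ∃ i₀ ∈ I, ∃ j₀ ∈ J, 0 < volume {x ∈ Ω | D i₀ j₀ x < 0}

/-- First symmetric eigenvalue on `Ω'`: the infimum of the Rayleigh quotient of the
symmetric matrix `C` over nontrivial test functions. -/
def lamOneSym {N m : ℕ} (Ω' : Set (EuclN N)) (C : Fin m → Fin m → EuclN N → ℝ) : ℝ :=
  sInf {r : ℝ | ∃ Ψ : Fin m → EuclN N → ℝ, IsTestFun Ω' Ψ ∧ (∃ i x, Ψ i x ≠ 0) ∧
    r = BformL Ω' C Ψ Ψ / ∫ x in Ω', ∑ i, (Ψ i x) ^ 2}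

end

/-! Suppose `u_i(x₀) > 0`. Test the subsolution inequality with `ψ_j = G_δ(u_j)`, where
`G_δ = rampPrimitive δ` is a `C¹` function with `G_δ = 0` on `(-∞, δ]`, `0 ≤ G_δ' ≤ 1`,
`G_δ' = 1` on `[2δ, ∞)` and `u - 2δ ≤ G_δ(u) ≤ u⁺`; since `u ≤ 0` on `∂Ω'`, `ψ` is a nonnegative
test function. The gradient term is `∑ G_δ'(u_j) |∇u_j|²`, and nonnegative definiteness of `D`
together with cooperativity bounds the zeroth-order term below by `-O(δ)`. Letting `δ → 0` gives
`∇u_i = 0` on `{u_i > 0}`, so the level set `{u_i = u_i(x₀)}` is open and closed in `ℝ^N`; it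
cannot be all of `ℝ^N` because it lies in the bounded set `Ω'`. -/

lemma LinCoop.mono {N m : ℕ} {Ω Ω' : Set (EuclN N)} {D : Fin m → Fin m → EuclN N → ℝ}
    (h : LinCoop Ω D) (hsub : Ω' ⊆ Ω) : LinCoop Ω' D :=
  fun i j hij => (h i j hij).mono fun _ hx hx' => hx (hsub hx')

lemma LinCoop.ae_forall {N m : ℕ} {Ω : Set (EuclN N)} {D : Fin m → Fin m → EuclN N → ℝ}
    (h : LinCoop Ω D) : ∀ᵐ x ∂volume, x ∈ Ω → ∀ i j, i ≠ j → D i j x ≤ 0 := by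
  have : ∀ᵐ x ∂volume, ∀ i j, i ≠ j → x ∈ Ω → D i j x ≤ 0 :=
    ae_all_iff.2 fun i => ae_all_iff.2 fun j => by
      by_cases hij : i = j
      · exact .of_forall fun _ h => absurd hij h
      · exact (h i j hij).mono fun _ hx _ => hx
  filter_upwards [this] with x hx hxΩ i j hij using hx i j hij hxΩ

namespace MaxPrinciple

open intervalIntegral Topology Filter

noncomputable def ramp (δ t : ℝ) : ℝ := min 1 (max 0 ((t - δ) / δ))

noncomputable def rampPrimitive (δ t : ℝ) : ℝ := ∫ s in (0 : ℝ)..t, ramp δ s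

lemma continuous_ramp (δ : ℝ) : Continuous (ramp δ) := by
  unfold ramp; fun_prop

lemma ramp_nonneg (δ t : ℝ) : 0 ≤ ramp δ t := le_min zero_le_one (le_max_left _ _)

lemma ramp_le_one (δ t : ℝ) : ramp δ t ≤ 1 := min_le_left _ _

lemma ramp_eq_zero {δ t : ℝ} (hδ : 0 < δ) (ht : t ≤ δ) : ramp δ t = 0 := by
  have : (t - δ) / δ ≤ 0 := div_nonpos_of_nonpos_of_nonneg (by linarith) hδ.le
  simp [ramp, max_eq_left this]

lemma ramp_eq_one {δ t : ℝ} (hδ : 0 < δ) (ht : 2 * δ ≤ t) : ramp δ t = 1 := by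
  have : 1 ≤ (t - δ) / δ := (le_div_iff₀ hδ).2 (by linarith)
  simp [ramp, max_eq_right (zero_le_one.trans this), this]

lemma hasDerivAt_rampPrimitive (δ t : ℝ) : HasDerivAt (rampPrimitive δ) (ramp δ t) t :=
  ((continuous_ramp δ).integral_hasStrictDerivAt 0 t).hasDerivAt

lemma contDiff_rampPrimitive (δ : ℝ) : ContDiff ℝ 1 (rampPrimitive δ) := by
  have hderiv : deriv (rampPrimitive δ) = ramp δ :=
    funext fun t => (hasDerivAt_rampPrimitive δ t).deriv
  rw [contDiff_one_iff_deriv, hderiv]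
  exact ⟨fun t => (hasDerivAt_rampPrimitive δ t).differentiableAt, continuous_ramp δ⟩

lemma rampPrimitive_eq_zero {δ t : ℝ} (hδ : 0 < δ) (ht : t ≤ δ) : rampPrimitive δ t = 0 := by
  refine (integral_congr fun s hs => ramp_eq_zero hδ ?_).trans integral_zero
  rcases le_total 0 t with h | h
  · rw [uIcc_of_le h] at hs; linarith [hs.2]
  · rw [uIcc_of_ge h] at hs; linarith [hs.2]

lemma rampPrimitive_nonneg {δ : ℝ} (hδ : 0 < δ) (t : ℝ) : 0 ≤ rampPrimitive δ t := by
  rcases le_total t δ with h | h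
  · rw [rampPrimitive_eq_zero hδ h]
  · exact integral_nonneg (by linarith) fun s _ => ramp_nonneg δ s

lemma rampPrimitive_le {δ : ℝ} (hδ : 0 < δ) (t : ℝ) : rampPrimitive δ t ≤ max t 0 := by
  rcases le_total t δ with h | h
  · rw [rampPrimitive_eq_zero hδ h]; exact le_max_right _ _
  · calc rampPrimitive δ t ≤ ∫ _ in (0 : ℝ)..t, (1 : ℝ) :=
          integral_mono_on (by linarith) ((continuous_ramp δ).intervalIntegrable 0 t)
            intervalIntegrable_const fun s _ => ramp_le_one δ s
      _ = t := by simp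
      _ ≤ max t 0 := le_max_left _ _

lemma sub_le_rampPrimitive {δ : ℝ} (hδ : 0 < δ) (t : ℝ) : t - 2 * δ ≤ rampPrimitive δ t := by
  rcases le_total t (2 * δ) with h | h
  · linarith [rampPrimitive_nonneg hδ t]
  · have hint : ∀ a b, IntervalIntegrable (ramp δ) volume a b :=
      fun a b => (continuous_ramp δ).intervalIntegrable a b
    have htail : ∫ s in (2 * δ)..t, ramp δ s = t - 2 * δ := by
      rw [integral_congr (g := fun _ => (1 : ℝ)) fun s hs => ramp_eq_one hδ ?_]
      · simp
      · rw [uIcc_of_le h] at hs; exact hs.1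
    have hhead := rampPrimitive_nonneg hδ (2 * δ)
    rw [rampPrimitive] at hhead ⊢
    rw [← integral_add_adjacent_intervals (hint 0 (2 * δ)) (hint _ t), htail]
    linarith

/-- Splitting `u = g + (u - g)`: the quadratic form of `d` at `g` is nonnegative, the diagonal
part of the remainder is nonnegative since `0 ≤ g ≤ u⁺`, and cooperativity bounds each
off-diagonal term by `M B ε`. -/
theorem neg_le_sum_mul_mul_of_cooperative {ι : Type*} [Fintype ι] {d : ι → ι → ℝ}
    {u g : ι → ℝ} {M B ε : ℝ}
    (hpsd : ∀ ξ : ι → ℝ, 0 ≤ ∑ i, ∑ j, d i j * ξ i * ξ j)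
    (hcoop : ∀ i j, i ≠ j → d i j ≤ 0) (hM : ∀ i j, |d i j| ≤ M) (hB : ∀ j, |u j| ≤ B)
    (hg_nonneg : ∀ j, 0 ≤ g j) (hg_le : ∀ j, g j ≤ max (u j) 0) (hle_g : ∀ j, u j - ε ≤ g j)
    (hε : 0 ≤ ε) :
    -(Fintype.card ι ^ 2 * (M * B * ε)) ≤ ∑ i, ∑ j, d i j * u i * g j := by
  have hterm : ∀ i j, -(M * B * ε) ≤ d i j * (u i - g i) * g j := by
    intro i j
    have hgB : g j ≤ B := (hg_le j).trans (max_le ((le_abs_self _).trans (hB j))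
      ((abs_nonneg _).trans (hB j)))
    have hM0 : 0 ≤ M := (abs_nonneg _).trans (hM i j)
    by_cases hij : i = j
    · subst hij
      classical
      have hdiag : 0 ≤ d i i := by
        simpa [Pi.single_apply, mul_ite, ite_mul, Finset.sum_ite_eq'] using hpsd (Pi.single i 1)
      have hgu : 0 ≤ (u i - g i) * g i := by
        rcases le_total (u i) 0 with h | h
        · have : g i = 0 := le_antisymm (by simpa [h] using hg_le i) (hg_nonneg i)
          simp [this]
        · exact mul_nonneg (by linarith [hg_le i, max_eq_left h]) (hg_nonneg i)
      have : 0 ≤ d i i * ((u i - g i) * g i) := mul_nonneg hdiag hgu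
      nlinarith [mul_nonneg hM0 (mul_nonneg ((hg_nonneg i).trans hgB) hε)]
    · have hd := hcoop i j hij
      have hdM : -M ≤ d i j := by linarith [neg_abs_le (d i j), hM i j]
      have h1 : d i j * ε ≤ d i j * (u i - g i) :=
        mul_le_mul_of_nonpos_left (by linarith [hle_g i]) hd
      have h2 : -(M * ε) ≤ d i j * ε := by nlinarith
      have h3 : -(M * ε) * g j ≤ d i j * (u i - g i) * g j :=
        mul_le_mul_of_nonneg_right (h2.trans h1) (hg_nonneg j)
      nlinarith [mul_le_mul_of_nonneg_left hgB (mul_nonneg hM0 hε)]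
  have hsplit : ∑ i, ∑ j, d i j * u i * g j =
      ∑ i, ∑ j, d i j * g i * g j + ∑ i, ∑ j, d i j * (u i - g i) * g j := by
    rw [← Finset.sum_add_distrib]
    refine Finset.sum_congr rfl fun i _ => ?_
    rw [← Finset.sum_add_distrib]
    exact Finset.sum_congr rfl fun j _ => by ring
  have hrest : -(Fintype.card ι ^ 2 * (M * B * ε)) ≤ ∑ i, ∑ j, d i j * (u i - g i) * g j := by
    have := Finset.sum_le_sum fun i (_ : i ∈ Finset.univ) =>
      Finset.sum_le_sum fun j (_ : j ∈ Finset.univ) => hterm i j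
    simp only [Finset.sum_const, Finset.card_univ, nsmul_eq_mul] at this
    linarith
  linarith [hpsd g]

lemma closure_inter_preimage_Ici_subset {X : Type*} [TopologicalSpace X] {Ω : Set X}
    {u : X → ℝ} {t : ℝ} (hbdry : ∀ x ∈ frontier Ω, u x ≤ 0) (ht : 0 < t) :
    closure Ω ∩ u ⁻¹' Ici t ⊆ Ω := by
  intro x ⟨hxcl, hxt⟩
  by_contra hx
  have := hbdry x ⟨hxcl, fun h => hx (interior_subset h)⟩
  exact absurd (lt_of_lt_of_le ht hxt) (not_lt.2 this)

lemma isCompact_closure_inter_preimage_Ici {X : Type*} [PseudoMetricSpace X] [ProperSpace X]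
    {Ω : Set X} {u : X → ℝ} (t : ℝ) (hb : Bornology.IsBounded Ω)
    (hu : ContinuousOn u (closure Ω)) : IsCompact (closure Ω ∩ u ⁻¹' Ici t) :=
  hb.isCompact_closure.of_isClosed_subset
    (hu.preimage_isClosed_of_isClosed isClosed_closure isClosed_Ici) inter_subset_left

section Cutoff

variable {E : Type*} [NormedAddCommGroup E] {Ω : Set E} {u : E → ℝ} {G : ℝ → ℝ} {δ : ℝ}

lemma tsupport_indicator_comp_subset (hu : ContinuousOn u (closure Ω))
    (hG : ∀ t ≤ δ, G t = 0) :
    tsupport (Ω.indicator fun x => G (u x)) ⊆ closure Ω ∩ u ⁻¹' Ici δ := by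
  refine closure_minimal (fun x hx => ?_)
    (hu.preimage_isClosed_of_isClosed isClosed_closure isClosed_Ici)
  have hxΩ : x ∈ Ω := by by_contra h; exact hx (indicator_of_notMem h _)
  rw [Function.mem_support, indicator_of_mem hxΩ] at hx
  exact ⟨subset_closure hxΩ, le_of_not_ge fun h => hx (hG _ h)⟩

variable [NormedSpace ℝ E]

lemma contDiff_indicator_comp (hΩ : IsOpen Ω) (hu : ContDiffOn ℝ 1 u Ω)
    (hu' : ContinuousOn u (closure Ω)) (hbdry : ∀ x ∈ frontier Ω, u x ≤ 0)
    (hδ : 0 < δ) (hG : ContDiff ℝ 1 G) (hG0 : ∀ t ≤ δ, G t = 0) :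
    ContDiff ℝ 1 (Ω.indicator fun x => G (u x)) := by
  rw [contDiff_iff_contDiffAt]
  intro x
  by_cases hx : x ∈ Ω
  · exact (hG.contDiffAt.comp x (hu.contDiffAt (hΩ.mem_nhds hx))).congr_of_eventuallyEq
      (Filter.eventuallyEq_of_mem (hΩ.mem_nhds hx) fun y hy => indicator_of_mem hy _)
  · have hsupp : x ∉ tsupport (Ω.indicator fun x => G (u x)) := fun h =>
      hx (closure_inter_preimage_Ici_subset hbdry hδ (tsupport_indicator_comp_subset hu' hG0 h))
    exact contDiffAt_const.congr_of_eventuallyEq (notMem_tsupport_iff_eventuallyEq.1 hsupp)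

end Cutoff

lemma gradient_indicator_comp {E : Type*} [NormedAddCommGroup E] [InnerProductSpace ℝ E]
    [CompleteSpace E] {Ω : Set E} {u : E → ℝ} {G : ℝ → ℝ} {G' : ℝ} {x : E} (hΩ : IsOpen Ω)
    (hx : x ∈ Ω) (hG : HasDerivAt G G' (u x)) (hu : DifferentiableAt ℝ u x) :
    gradient (Ω.indicator fun y => G (u y)) x = G' • gradient u x := by
  have hloc : (Ω.indicator fun y => G (u y)) =ᶠ[𝓝 x] fun y => G (u y) :=
    Filter.eventuallyEq_of_mem (hΩ.mem_nhds hx) fun y hy => indicator_of_mem hy _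
  have hcomp : HasFDerivAt (fun y => G (u y)) (G' • fderiv ℝ u x) x :=
    hG.comp_hasFDerivAt x hu.hasFDerivAt
  rw [hloc.gradient_eq, (hasFDerivAt_iff_hasGradientAt.1 hcomp).gradient, map_smul]
  rfl

lemma integrableOn_ramp_mul {E : Type*} [NormedAddCommGroup E] [NormedSpace ℝ E]
    [FiniteDimensional ℝ E] [MeasurableSpace E] [BorelSpace E] {μ : Measure E}
    [IsFiniteMeasureOnCompacts μ] {Ω : Set E} {u f : E → ℝ} {δ : ℝ} (hΩ : IsOpen Ω)
    (hb : Bornology.IsBounded Ω) (hu : ContinuousOn u (closure Ω)) (hf : ContinuousOn f Ω)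
    (hbdry : ∀ x ∈ frontier Ω, u x ≤ 0) (hδ : 0 < δ) :
    IntegrableOn (fun x => ramp δ (u x) * f x) Ω μ :=
  ((((continuous_ramp δ).comp_continuousOn (hu.mono subset_closure)).mul hf).mono
    (closure_inter_preimage_Ici_subset hbdry hδ) |>.integrableOn_compact
    (isCompact_closure_inter_preimage_Ici δ hb hu)).of_forall_sdiff_eq_zero hΩ.measurableSet
    fun y ⟨hy, hyK⟩ => by
      have hyδ : u y < δ := not_le.1 fun h => hyK ⟨subset_closure hy, h⟩
      show ramp δ (u y) * f y = 0
      rw [ramp_eq_zero hδ hyδ.le, zero_mul]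

lemma continuousOn_gradient {E : Type*} [NormedAddCommGroup E] [InnerProductSpace ℝ E]
    [CompleteSpace E] {Ω : Set E} {u : E → ℝ} (hΩ : IsOpen Ω) (hu : ContDiffOn ℝ 1 u Ω) :
    ContinuousOn (gradient u) Ω :=
  (InnerProductSpace.toDual ℝ E).symm.continuous.comp_continuousOn
    (hu.continuousOn_fderiv_of_isOpen hΩ le_rfl)

theorem nonpos_of_fderiv_eq_zero_of_pos {E : Type*} [NormedAddCommGroup E] [NormedSpace ℝ E]
    [Nontrivial E] {Ω : Set E} {u : E → ℝ} (hΩ : IsOpen Ω) (hb : Bornology.IsBounded Ω)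
    (hu : ContinuousOn u (closure Ω)) (hdiff : DifferentiableOn ℝ u Ω)
    (hbdry : ∀ x ∈ frontier Ω, u x ≤ 0) (hzero : ∀ x ∈ Ω, 0 < u x → fderiv ℝ u x = 0) :
    ∀ x ∈ Ω, u x ≤ 0 := by
  intro x₀ hx₀
  by_contra! hpos
  have hW : IsOpen (Ω ∩ u ⁻¹' Ioi 0) :=
    (hu.mono subset_closure).isOpen_inter_preimage hΩ isOpen_Ioi
  have hopen : IsOpen ((Ω ∩ u ⁻¹' Ioi 0) ∩ u ⁻¹' {u x₀}) :=
    hW.isOpen_inter_preimage_of_fderiv_eq_zero (hdiff.mono inter_subset_left)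
      (fun x hx => hzero x hx.1 hx.2) _
  have hlevel : (Ω ∩ u ⁻¹' Ioi 0) ∩ u ⁻¹' {u x₀} = closure Ω ∩ u ⁻¹' {u x₀} := by
    ext x
    refine ⟨fun ⟨⟨hx, _⟩, hxc⟩ => ⟨subset_closure hx, hxc⟩, fun ⟨hxcl, hxc⟩ => ?_⟩
    have hxc' : u x = u x₀ := hxc
    have hx : x ∈ Ω := closure_inter_preimage_Ici_subset hbdry hpos ⟨hxcl, hxc'.ge⟩
    exact ⟨⟨hx, show 0 < u x by rw [hxc']; exact hpos⟩, hxc⟩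
  have hclosed : IsClosed (closure Ω ∩ u ⁻¹' {u x₀}) :=
    hu.preimage_isClosed_of_isClosed isClosed_closure isClosed_singleton
  have huniv := IsClopen.eq_univ ⟨hclosed, hlevel ▸ hopen⟩ ⟨x₀, subset_closure hx₀, rfl⟩
  exact NormedSpace.unbounded_univ ℝ E (hb.closure.subset (huniv ▸ inter_subset_left))

/-- Where `u ≥ t > 0`, `ramp δ u = 1` once `δ ≤ t / 2`, so `∫_{u ≥ t} |∇u|² ≤ C δ → 0`. -/
theorem gradient_eq_zero_of_integral_ramp_le {E : Type*} [NormedAddCommGroup E]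
    [InnerProductSpace ℝ E] [FiniteDimensional ℝ E] [MeasurableSpace E] [BorelSpace E]
    {μ : Measure E} [IsFiniteMeasureOnCompacts μ] [μ.IsOpenPosMeasure] {Ω : Set E} {u : E → ℝ}
    (hΩ : IsOpen Ω) (hb : Bornology.IsBounded Ω) (hu : ContinuousOn u (closure Ω))
    (hgrad : ContinuousOn (gradient u) Ω) (hbdry : ∀ x ∈ frontier Ω, u x ≤ 0) {C : ℝ}
    (hest : ∀ δ > 0, ∫ x in Ω, ramp δ (u x) * ‖gradient u x‖ ^ 2 ∂μ ≤ C * δ) :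
    ∀ x ∈ Ω, 0 < u x → gradient u x = 0 := by
  intro x hx hpos
  set t := u x / 2 with ht
  have ht0 : 0 < t := by positivity
  set K := closure Ω ∩ u ⁻¹' Ici t
  have hK : IsCompact K := isCompact_closure_inter_preimage_Ici t hb hu
  have hKΩ : K ⊆ Ω := closure_inter_preimage_Ici_subset hbdry ht0
  have hf : ContinuousOn (fun y => ‖gradient u y‖ ^ 2) Ω := (hgrad.norm).pow 2
  have hbound : ∀ δ ∈ Ioo 0 (t / 2), ∫ y in K, ‖gradient u y‖ ^ 2 ∂μ ≤ C * δ := by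
    intro δ ⟨hδ, hδt⟩
    have hint : IntegrableOn (fun y => ramp δ (u y) * ‖gradient u y‖ ^ 2) Ω μ :=
      integrableOn_ramp_mul hΩ hb hu hf hbdry hδ
    calc ∫ y in K, ‖gradient u y‖ ^ 2 ∂μ = ∫ y in K, ramp δ (u y) * ‖gradient u y‖ ^ 2 ∂μ :=
          setIntegral_congr_fun hK.measurableSet fun y hy => by
            rw [ramp_eq_one hδ (by linarith [show t ≤ u y from hy.2]), one_mul]
      _ ≤ ∫ y in Ω, ramp δ (u y) * ‖gradient u y‖ ^ 2 ∂μ :=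
          setIntegral_mono_set hint
            ((ae_restrict_mem hΩ.measurableSet).mono fun y _ => by
              have := ramp_nonneg δ (u y); positivity)
            (Eventually.of_forall hKΩ)
      _ ≤ C * δ := hest δ hδ
  have hCδ : Tendsto (fun δ => C * δ) (𝓝[>] 0) (𝓝 0) := by
    have := ((continuous_const_mul C).tendsto (0 : ℝ)).mono_left (nhdsWithin_le_nhds (s := Ioi 0))
    rwa [mul_zero] at this
  have hle : ∫ y in K, ‖gradient u y‖ ^ 2 ∂μ ≤ 0 :=
    ge_of_tendsto hCδ (mem_of_superset (Ioo_mem_nhdsGT (by positivity)) hbound)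
  have hae : (fun y => ‖gradient u y‖ ^ 2) =ᵐ[μ.restrict K] 0 :=
    (setIntegral_eq_zero_iff_of_nonneg_ae (Eventually.of_forall fun y => by positivity)
      ((hf.mono hKΩ).integrableOn_compact hK)).1
      (le_antisymm hle (setIntegral_nonneg hK.measurableSet fun y _ => by positivity))
  have hWK : Ω ∩ u ⁻¹' Ioi t ⊆ K := fun y ⟨hy, hyt⟩ =>
    ⟨subset_closure hy, le_of_lt (show t < u y from hyt)⟩
  have hWopen : IsOpen (Ω ∩ u ⁻¹' Ioi t) :=
    (hu.mono subset_closure).isOpen_inter_preimage hΩ isOpen_Ioi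
  have hx0 := Measure.eqOn_open_of_ae_eq (ae_restrict_of_ae_restrict_of_subset hWK hae) hWopen
    (hf.mono inter_subset_left) continuousOn_const ⟨hx, show t < u x by linarith⟩
  simpa using hx0

lemma integrableOn_sum_sum_mul_mul {α ι : Type*} [MeasurableSpace α] [Fintype ι]
    {μ : Measure α} {s : Set α} {d : ι → ι → α → ℝ} {v w : ι → α → ℝ} {M A B : ℝ}
    (hs : MeasurableSet s) (hμs : μ s < ⊤) (hd : ∀ i j, AEStronglyMeasurable (d i j) (μ.restrict s))
    (hv : ∀ i, AEStronglyMeasurable (v i) (μ.restrict s))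
    (hw : ∀ j, AEStronglyMeasurable (w j) (μ.restrict s)) (hdM : ∀ i j, ∀ x ∈ s, |d i j x| ≤ M)
    (hvA : ∀ i, ∀ x ∈ s, |v i x| ≤ A) (hwB : ∀ j, ∀ x ∈ s, |w j x| ≤ B) :
    IntegrableOn (fun x => ∑ i, ∑ j, d i j x * v i x * w j x) s μ := by
  refine integrable_finsetSum _ fun i _ => integrable_finsetSum _ fun j _ =>
    IntegrableOn.of_bound hμs (((hd i j).mul (hv i)).mul (hw j)) (M * A * B)
      ((ae_restrict_mem hs).mono fun x hx => ?_)
  have hM0 : 0 ≤ M := (abs_nonneg _).trans (hdM i j x hx)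
  have hA0 : 0 ≤ A := (abs_nonneg _).trans (hvA i x hx)
  rw [Real.norm_eq_abs, abs_mul, abs_mul]
  exact mul_le_mul (mul_le_mul (hdM i j x hx) (hvA i x hx) (abs_nonneg _) hM0) (hwB j x hx)
    (abs_nonneg _) (mul_nonneg hM0 hA0)

lemma isTestFun_indicator_rampPrimitive {N m : ℕ} {Ω : Set (EuclN N)}
    {U : Fin m → EuclN N → ℝ} {δ : ℝ} (hΩ : IsOpen Ω) (hb : Bornology.IsBounded Ω)
    (hU : ∀ j, ContDiffOn ℝ 1 (U j) (closure Ω)) (hbdry : ∀ j, ∀ x ∈ frontier Ω, U j x ≤ 0)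
    (hδ : 0 < δ) : IsTestFun Ω fun j => Ω.indicator fun x => rampPrimitive δ (U j x) := by
  intro j
  have hsupp := tsupport_indicator_comp_subset (hU j).continuousOn
    fun t ht => rampPrimitive_eq_zero hδ ht
  exact ⟨contDiff_indicator_comp hΩ ((hU j).mono subset_closure) (hU j).continuousOn (hbdry j) hδ
      (contDiff_rampPrimitive δ) fun t ht => rampPrimitive_eq_zero hδ ht,
    (isCompact_closure_inter_preimage_Ici δ hb (hU j).continuousOn).of_isClosed_subset
      (isClosed_tsupport _) hsupp,
    hsupp.trans (closure_inter_preimage_Ici_subset (hbdry j) hδ)⟩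

theorem integral_ramp_mul_norm_gradient_sq_le {N m : ℕ} {Ω : Set (EuclN N)}
    {D : Fin m → Fin m → EuclN N → ℝ} {U : Fin m → EuclN N → ℝ} {M B δ : ℝ}
    (hΩ : IsOpen Ω) (hb : Bornology.IsBounded Ω) (hmeas : ∀ i j, Measurable (D i j))
    (hM : ∀ i j, ∀ x ∈ Ω, |D i j x| ≤ M) (hcoop : LinCoop Ω D)
    (hpsd : ∀ᵐ x ∂(volume : Measure (EuclN N)), x ∈ Ω →
      ∀ ξ : Fin m → ℝ, 0 ≤ ∑ i, ∑ j, D i j x * ξ i * ξ j)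
    (hU : ∀ j, ContDiffOn ℝ 1 (U j) (closure Ω)) (hB : ∀ j, ∀ x ∈ Ω, |U j x| ≤ B)
    (hbdry : ∀ j, ∀ x ∈ frontier Ω, U j x ≤ 0) (hsubsol : WeakSubSol Ω D U) (hδ : 0 < δ)
    (i : Fin m) :
    ∫ x in Ω, ramp δ (U i x) * ‖gradient (U i) x‖ ^ 2 ≤
      (2 * m ^ 2 * M * B * volume.real Ω) * δ := by
  set Ψ : Fin m → EuclN N → ℝ := fun j => Ω.indicator fun x => rampPrimitive δ (U j x)
  set F : Fin m → EuclN N → ℝ := fun j x => ramp δ (U j x) * ‖gradient (U j) x‖ ^ 2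
  set c : ℝ := m ^ 2 * (M * B * (2 * δ))
  have hUc : ∀ j, ContinuousOn (U j) (closure Ω) := fun j => (hU j).continuousOn
  have hUΩ : ∀ j, ContDiffOn ℝ 1 (U j) Ω := fun j => (hU j).mono subset_closure
  have htest : IsTestFun Ω Ψ := isTestFun_indicator_rampPrimitive hΩ hb hU hbdry hδ
  have hΨ_nonneg : ∀ j x, 0 ≤ Ψ j x := fun j x =>
    indicator_nonneg (fun y _ => rampPrimitive_nonneg hδ _) x
  have hΨ_le : ∀ j, ∀ x ∈ Ω, Ψ j x ≤ max (U j x) 0 := fun j x hx => by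
    simp only [Ψ, indicator_of_mem hx]; exact rampPrimitive_le hδ _
  have hinner : ∀ j, ∀ x ∈ Ω, ⟪gradient (U j) x, gradient (Ψ j) x⟫ = F j x := by
    intro j x hx
    rw [gradient_indicator_comp hΩ hx (hasDerivAt_rampPrimitive δ _)
      (((hUΩ j).differentiableOn one_ne_zero).differentiableAt (hΩ.mem_nhds hx)),
      real_inner_smul_right, real_inner_self_eq_norm_sq]
  have hFint : ∀ j, IntegrableOn (F j) Ω := fun j =>
    integrableOn_ramp_mul hΩ hb (hUc j) ((continuousOn_gradient hΩ (hUΩ j)).norm.pow 2)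
      (hbdry j) hδ
  have hgrad_int : IntegrableOn (fun x => ∑ j, ⟪gradient (U j) x, gradient (Ψ j) x⟫) Ω :=
    IntegrableOn.congr_fun (integrable_finsetSum _ fun j _ => hFint j)
      (fun x hx => Finset.sum_congr rfl fun j _ => (hinner j x hx).symm) hΩ.measurableSet
  have hzeroth_int : IntegrableOn (fun x => ∑ i, ∑ j, D i j x * U i x * Ψ j x) Ω :=
    integrableOn_sum_sum_mul_mul hΩ.measurableSet hb.measure_lt_top
      (fun i j => (hmeas i j).aestronglyMeasurable)
      (fun i => (hUc i).mono subset_closure |>.aestronglyMeasurable hΩ.measurableSet)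
      (fun j => (htest j).1.continuous.aestronglyMeasurable) hM hB fun j x hx => by
        rw [abs_of_nonneg (hΨ_nonneg j x)]
        exact (hΨ_le j x hx).trans (max_le ((le_abs_self _).trans (hB j x hx))
          ((abs_nonneg _).trans (hB j x hx)))
  have hzeroth_lower : ∀ᵐ x ∂volume.restrict Ω, -c ≤ ∑ i, ∑ j, D i j x * U i x * Ψ j x := by
    filter_upwards [ae_restrict_of_ae hpsd, ae_restrict_of_ae hcoop.ae_forall,
      ae_restrict_mem hΩ.measurableSet] with x hxpsd hxcoop hx
    simpa using neg_le_sum_mul_mul_of_cooperative (hxpsd hx) (hxcoop hx)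
      (fun i j => hM i j x hx) (fun j => hB j x hx) (fun j => hΨ_nonneg j x)
      (fun j => hΨ_le j x hx)
      (fun j => by simpa [Ψ, indicator_of_mem hx] using sub_le_rampPrimitive hδ (U j x))
      (by positivity : (0 : ℝ) ≤ 2 * δ)
  have hsum : ∫ x in Ω, ∑ j, F j x ≤ c * volume.real Ω := by
    have hform : BformL Ω D U Ψ = (∫ x in Ω, ∑ j, F j x) +
        ∫ x in Ω, ∑ i, ∑ j, D i j x * U i x * Ψ j x := by
      rw [BformL, integral_add hgrad_int hzeroth_int]
      congr 1
      exact setIntegral_congr_fun hΩ.measurableSet fun x hx =>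
        Finset.sum_congr rfl fun j _ => hinner j x hx
    have hzeroth : -c * volume.real Ω ≤ ∫ x in Ω, ∑ i, ∑ j, D i j x * U i x * Ψ j x := by
      have := integral_mono_ae (integrableOn_const (C := -c) hb.measure_lt_top.ne) hzeroth_int
        hzeroth_lower
      rwa [setIntegral_const, smul_eq_mul, mul_comm] at this
    linarith [hsubsol Ψ htest hΨ_nonneg]
  calc ∫ x in Ω, F i x ≤ ∫ x in Ω, ∑ j, F j x :=
        setIntegral_mono_on (hFint i) (integrable_finsetSum _ fun j _ => hFint j)
          hΩ.measurableSet fun x _ => Finset.single_le_sum (f := fun j => F j x)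
            (fun j _ => by have := ramp_nonneg δ (U j x); positivity) (Finset.mem_univ i)
    _ ≤ c * volume.real Ω := hsum
    _ = (2 * m ^ 2 * M * B * volume.real Ω) * δ := by ring

end MaxPrinciple

theorem statement6_general
    {N m : ℕ} (hN : 2 ≤ N)
    (Ω : Set (EuclN N)) (hΩb : Bornology.IsBounded Ω)
    (D : Fin m → Fin m → EuclN N → ℝ)
    (hmeas : ∀ i j, Measurable (D i j))
    (hbdd : ∀ i j, ∃ M : ℝ, ∀ x ∈ Ω, |D i j x| ≤ M)
    (hcoop : LinCoop Ω D)
    (Ω' : Set (EuclN N)) (hΩ'o : IsOpen Ω') (hsub : Ω' ⊆ Ω)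
    (hdef : ∀ᵐ x ∂(volume : Measure (EuclN N)), x ∈ Ω' →
      ∀ ξ : Fin m → ℝ, 0 ≤ ∑ i, ∑ j, D i j x * ξ i * ξ j)
    (U : Fin m → EuclN N → ℝ)
    (hUreg : ∀ i, ContDiffOn ℝ 1 (U i) (closure Ω'))
    (hbdry : ∀ i, ∀ x ∈ frontier Ω', U i x ≤ 0)
    (hsubsol : WeakSubSol Ω' D U) :
    ∀ i, ∀ x ∈ Ω', U i x ≤ 0 := by
  have : Nonempty (Fin N) := ⟨⟨0, by omega⟩⟩
  have hb : Bornology.IsBounded Ω' := hΩb.subset hsub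
  obtain ⟨M, hM⟩ : ∃ M, ∀ i j, ∀ x ∈ Ω', |D i j x| ≤ M := by
    choose Mij hMij using hbdd
    obtain ⟨M, hM⟩ := Finite.exists_le fun p : Fin m × Fin m => Mij p.1 p.2
    exact ⟨M, fun i j x hx => (hMij i j x (hsub hx)).trans (hM (i, j))⟩
  obtain ⟨B, hB⟩ : ∃ B, ∀ j, ∀ x ∈ Ω', |U j x| ≤ B := by
    choose Bj hBj using fun j =>
      hb.isCompact_closure.exists_bound_of_continuousOn (hUreg j).continuousOn
    obtain ⟨B, hB⟩ := Finite.exists_le Bj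
    exact ⟨B, fun j x hx => (hBj j x (subset_closure hx)).trans (hB j)⟩
  intro i
  have hUi : ContDiffOn ℝ 1 (U i) Ω' := (hUreg i).mono subset_closure
  have hgrad : ∀ x ∈ Ω', 0 < U i x → gradient (U i) x = 0 :=
    MaxPrinciple.gradient_eq_zero_of_integral_ramp_le hΩ'o hb
      (hUreg i).continuousOn (MaxPrinciple.continuousOn_gradient hΩ'o hUi) (hbdry i)
      fun δ hδ => MaxPrinciple.integral_ramp_mul_norm_gradient_sq_le hΩ'o hb hmeas hM
        (hcoop.mono hsub) hdef hUreg hB hbdry hsubsol hδ i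
  exact MaxPrinciple.nonpos_of_fderiv_eq_zero_of_pos hΩ'o hb (hUreg i).continuousOn
    (hUi.differentiableOn one_ne_zero) (hbdry i) fun x hx hpos => by
      rw [← toDual_gradient, hgrad x hx hpos, map_zero]

/-- **Maximum principle under a.e. nonnegative definiteness of the matrix `D`.** -/
theorem statement6
    {N m : ℕ} (hN : 2 ≤ N)
    (Ω : Set (EuclN N)) (hΩo : IsOpen Ω) (hΩb : Bornology.IsBounded Ω)
    (D : Fin m → Fin m → EuclN N → ℝ)
    (hmeas : ∀ i j, Measurable (D i j))
    (hbdd : ∀ i j, ∃ M : ℝ, ∀ x ∈ Ω, |D i j x| ≤ M)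
    (hcoop : LinCoop Ω D)
    (Ω' : Set (EuclN N)) (hΩ'o : IsOpen Ω') (hsub : Ω' ⊆ Ω)
    (hdef : ∀ᵐ x ∂(volume : Measure (EuclN N)), x ∈ Ω' →
      ∀ ξ : Fin m → ℝ, 0 ≤ ∑ i, ∑ j, D i j x * ξ i * ξ j)
    (U : Fin m → EuclN N → ℝ)
    (hUreg : ∀ i, ContDiffOn ℝ 1 (U i) (closure Ω'))
    (hbdry : ∀ i, ∀ x ∈ frontier Ω', U i x ≤ 0)
    (hsubsol : WeakSubSol Ω' D U) :
    ∀ i, ∀ x ∈ Ω', U i x ≤ 0 :=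
  statement6_general hN Ω hΩb D hmeas hbdd hcoop Ω' hΩ'o hsub hdef U hUreg hbdry hsubsol
end

section
/- (Reflection comparison in every half-domain implies foliated Schwarz symmetry.) Let Ω be an open ball or annulus centered at the origin in ℝ^N, N ≥ 2, and let U = (u_1,…,u_m) ∈ C²(Ω;ℝ^m) ∩ C(Ω̄;ℝ^m) be a classical solution of −Δu_i = f_i(|x|,U) in Ω, u_i = 0 on ∂Ω, and assume the system is fully coupled along U in Ω(e) for every direction e ∈ S^{N−1}. If for every e ∈ S^{N−1} one has either U ≥ U^{σ_e} in Ω(e) or U ≤ U^{σ_e} in Ω(e) (componentwise), then U is foliated Schwarz symmetric. -/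
open MeasureTheory Real Set
open scoped RealInnerProductSpace ENNReal

/-! Let `W = ∑ᵢ uᵢ` and `v = ∫_Ω W(x) x dx`. Since `σ_e` preserves `Ω` and reverses the sign of
`x·e`, `2 v·e = ∫_Ω (W - W∘σ_e)(x) (x·e) dx`. If `U ≤ U^{σ_e}` in `Ω(e)`, this integrand is `≤ 0`
on all of `Ω`, so `v·e ≥ 0` forces `U = U^{σ_e}` in `Ω(e)`. Hence `U ≥ U^{σ_e}` in `Ω(e)` whenever
`v·e ≥ 0`, and `U` is foliated Schwarz symmetric with respect to the axis `v / |v|`. -/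

lemma IsOpen.eqOn_zero_of_nonneg_of_setIntegral_eq_zero {X : Type*} [TopologicalSpace X]
    [MeasurableSpace X] [OpensMeasurableSpace X] {μ : Measure X} [μ.IsOpenPosMeasure]
    {s : Set X} (hs : IsOpen s) {f : X → ℝ} (hf : ContinuousOn f s) (hfi : IntegrableOn f s μ)
    (hnonneg : ∀ x ∈ s, 0 ≤ f x) (h0 : ∫ x in s, f x ∂μ = 0) : EqOn f 0 s := by
  have hae : 0 ≤ᵐ[μ.restrict s] f :=
    (ae_restrict_iff' hs.measurableSet).2 (Filter.Eventually.of_forall hnonneg)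
  exact Measure.eqOn_open_of_ae_eq ((setIntegral_eq_zero_iff_of_nonneg_ae hae hfi).1 h0) hs hf
    continuousOn_const

lemma exists_norm_eq_one_and_eq_norm_smul {E : Type*} [NormedAddCommGroup E]
    [NormedSpace ℝ E] [Nontrivial E] (v : E) : ∃ p : E, ‖p‖ = 1 ∧ v = ‖v‖ • p := by
  by_cases hv : v = 0
  · obtain ⟨p, hp⟩ := exists_norm_eq E zero_le_one
    exact ⟨p, hp, by simp [hv]⟩
  · refine ⟨‖v‖⁻¹ • v, ?_, ?_⟩
    · rw [norm_smul, norm_inv, norm_norm, inv_mul_cancel₀ (norm_ne_zero_iff.2 hv)]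
    · rw [smul_smul, mul_inv_cancel₀ (norm_ne_zero_iff.2 hv), one_smul]

section Reflection

variable {N : ℕ} {e : EuclN N}

lemma reflPt_eq_reflection (he : ‖e‖ = 1) :
    reflPt e = Submodule.reflection ((ℝ ∙ e)ᗮ) := by
  ext1 x
  rw [Submodule.reflection_apply, Submodule.starProjection_orthogonal_val,
    Submodule.starProjection_singleton, real_inner_comm, he, reflPt]
  module

lemma inner_reflPt (he : ‖e‖ = 1) (x : EuclN N) : ⟪reflPt e x, e⟫ = -⟪x, e⟫ := by
  rw [reflPt, inner_sub_left, real_inner_smul_left, real_inner_self_eq_norm_sq, he]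
  ring

lemma reflPt_reflPt (he : ‖e‖ = 1) (x : EuclN N) : reflPt e (reflPt e x) = x := by
  rw [reflPt_eq_reflection he]
  exact Submodule.reflection_reflection _ x

lemma norm_reflPt (he : ‖e‖ = 1) (x : EuclN N) : ‖reflPt e x‖ = ‖x‖ := by
  rw [reflPt_eq_reflection he]
  exact LinearIsometryEquiv.norm_map _ x

lemma measurePreserving_reflPt (he : ‖e‖ = 1) :
    MeasurePreserving (reflPt e) (volume : Measure (EuclN N)) volume := by
  rw [reflPt_eq_reflection he]
  exact LinearIsometryEquiv.measurePreserving _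

lemma measurableEmbedding_reflPt (he : ‖e‖ = 1) :
    MeasurableEmbedding (reflPt e : EuclN N → EuclN N) := by
  rw [reflPt_eq_reflection he]
  exact (Submodule.reflection _).toHomeomorph.measurableEmbedding

end Reflection

lemma norm_eq_one_and_inner_pos_and_reflPt_eq_of_norm_eq {N : ℕ} {x y : EuclN N}
    (hxy : ‖x‖ = ‖y‖) (hne : x ≠ y) :
    ‖‖x - y‖⁻¹ • (x - y)‖ = 1 ∧ 0 < ⟪x, ‖x - y‖⁻¹ • (x - y)⟫ ∧
      reflPt (‖x - y‖⁻¹ • (x - y)) x = y := by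
  have hd : 0 < ‖x - y‖ := norm_pos_iff.2 (sub_ne_zero.2 hne)
  -- `‖x‖ = ‖y‖` gives `2 ⟪x, x - y⟫ = ‖x - y‖²`
  have hxe : ⟪x, ‖x - y‖⁻¹ • (x - y)⟫ = ‖x - y‖ / 2 := by
    have h := norm_sub_sq_real x y
    rw [← hxy] at h
    rw [real_inner_smul_right, inner_sub_right, real_inner_self_eq_norm_sq]
    field_simp
    linarith
  refine ⟨?_, by rw [hxe]; positivity, ?_⟩
  · rw [norm_smul, norm_inv, norm_norm, inv_mul_cancel₀ hd.ne']
  · rw [reflPt, hxe, smul_smul, show 2 * (‖x - y‖ / 2) * ‖x - y‖⁻¹ = 1 by field_simp,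
      one_smul, sub_sub_cancel]

lemma foliatedSchwarz_of_forall_inner_nonneg {N m : ℕ} [Nontrivial (EuclN N)]
    {Ω : Set (EuclN N)} {U : Fin m → EuclN N → ℝ} (v : EuclN N)
    (h : ∀ e : EuclN N, ‖e‖ = 1 → 0 ≤ ⟪v, e⟫ →
      ∀ i, ∀ x ∈ halfDom Ω e, U i (reflPt e x) ≤ U i x) :
    FoliatedSchwarz Ω U := by
  obtain ⟨p, hp, hvp⟩ := exists_norm_eq_one_and_eq_norm_smul v
  refine ⟨p, hp, fun i x hx y _ hxy hyx => ?_⟩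
  rcases eq_or_ne x y with rfl | hne
  · exact le_rfl
  obtain ⟨he, hxe, hσx⟩ := norm_eq_one_and_inner_pos_and_reflPt_eq_of_norm_eq hxy hne
  have hve : 0 ≤ ⟪v, ‖x - y‖⁻¹ • (x - y)⟫ := by
    rw [hvp, real_inner_smul_right, real_inner_smul_left, inner_sub_right, real_inner_comm x p,
      real_inner_comm y p]
    have := sub_nonneg.2 hyx
    positivity
  simpa only [hσx] using h _ he hve i x ⟨hx, hxe⟩

section ReflectionInvariant

variable {N : ℕ} {Ω : Set (EuclN N)} {e : EuclN N}

lemma setIntegral_comp_reflPt_mul_inner (he : ‖e‖ = 1) (hΩ : reflPt e ⁻¹' Ω = Ω)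
    (w : EuclN N → ℝ) :
    ∫ x in Ω, w (reflPt e x) * ⟪x, e⟫ = -∫ x in Ω, w x * ⟪x, e⟫ := by
  have := (measurePreserving_reflPt he).setIntegral_preimage_emb
    (measurableEmbedding_reflPt he) (fun y => w y * ⟪y, e⟫) Ω
  rw [hΩ] at this
  rw [← this, ← integral_neg]
  simp only [inner_reflPt he, mul_neg, neg_neg]

lemma MeasureTheory.IntegrableOn.comp_reflPt_mul_inner (he : ‖e‖ = 1) (hΩ : reflPt e ⁻¹' Ω = Ω)
    {w : EuclN N → ℝ} (hw : IntegrableOn (fun x => w x * ⟪x, e⟫) Ω) :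
    IntegrableOn (fun x => w (reflPt e x) * ⟪x, e⟫) Ω := by
  have := ((measurePreserving_reflPt he).integrableOn_comp_preimage
    (measurableEmbedding_reflPt he)).2 hw
  rw [hΩ] at this
  convert this.neg using 1
  ext x
  simp only [Function.comp_apply, Pi.neg_apply, inner_reflPt he, mul_neg, neg_neg]

lemma setIntegral_sub_comp_reflPt_mul_inner (he : ‖e‖ = 1) (hΩ : reflPt e ⁻¹' Ω = Ω)
    {w : EuclN N → ℝ} (hw : IntegrableOn (fun x => w x * ⟪x, e⟫) Ω) :
    ∫ x in Ω, (w (reflPt e x) - w x) * ⟪x, e⟫ = -2 * ∫ x in Ω, w x * ⟪x, e⟫ := by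
  simp only [sub_mul]
  rw [integral_sub (hw.comp_reflPt_mul_inner he hΩ) hw, setIntegral_comp_reflPt_mul_inner he hΩ]
  ring

lemma sub_comp_reflPt_mul_inner_nonneg (he : ‖e‖ = 1) (hΩ : reflPt e ⁻¹' Ω = Ω)
    {w : EuclN N → ℝ} (hle : ∀ x ∈ halfDom Ω e, w x ≤ w (reflPt e x)) {x : EuclN N}
    (hx : x ∈ Ω) : 0 ≤ (w (reflPt e x) - w x) * ⟪x, e⟫ := by
  rcases lt_trichotomy ⟪x, e⟫ 0 with hneg | hzero | hpos
  · have hσx : reflPt e x ∈ halfDom Ω e :=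
      ⟨by rwa [← Set.mem_preimage, hΩ], by rw [inner_reflPt he]; linarith⟩
    have := hle _ hσx
    rw [reflPt_reflPt he] at this
    nlinarith
  · rw [hzero, mul_zero]
  · nlinarith [hle x ⟨hx, hpos⟩]

lemma comp_reflPt_eq_of_le (he : ‖e‖ = 1) (hΩo : IsOpen Ω) (hΩ : reflPt e ⁻¹' Ω = Ω)
    {w : EuclN N → ℝ} (hwc : ContinuousOn w Ω) (hwi : IntegrableOn (fun x => w x * ⟪x, e⟫) Ω)
    (hle : ∀ x ∈ halfDom Ω e, w x ≤ w (reflPt e x)) (hmom : 0 ≤ ∫ x in Ω, w x * ⟪x, e⟫) :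
    ∀ x ∈ halfDom Ω e, w (reflPt e x) = w x := by
  set g : EuclN N → ℝ := fun x => (w (reflPt e x) - w x) * ⟪x, e⟫
  have hgi : IntegrableOn g Ω := by
    simp only [g, sub_mul]
    exact (hwi.comp_reflPt_mul_inner he hΩ).sub hwi
  have hgc : ContinuousOn g Ω := by
    have hσ : ContinuousOn (fun x => w (reflPt e x)) Ω :=
      hwc.comp (by unfold reflPt; fun_prop) (fun x hx => by rwa [← Set.mem_preimage, hΩ])
    exact (hσ.sub hwc).mul (by fun_prop)
  have hg0 : ∫ x in Ω, g x = 0 := by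
    have := setIntegral_nonneg (μ := volume) hΩo.measurableSet
      fun x hx => sub_comp_reflPt_mul_inner_nonneg he hΩ hle hx
    rw [setIntegral_sub_comp_reflPt_mul_inner he hΩ hwi] at this ⊢
    linarith
  intro x hx
  have := hΩo.eqOn_zero_of_nonneg_of_setIntegral_eq_zero hgc hgi
    (fun y hy => sub_comp_reflPt_mul_inner_nonneg he hΩ hle hy) hg0 hx.1
  simpa [g, hx.2.ne', sub_eq_zero] using this

end ReflectionInvariant

namespace IsBallOrAnnulus

variable {N : ℕ} {Ω : Set (EuclN N)}

lemma exists_eq_preimage_norm (hΩ : IsBallOrAnnulus Ω) :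
    ∃ R : ℝ, ∃ s : Set ℝ, IsOpen s ∧ s ⊆ Iio R ∧ Ω = (‖·‖) ⁻¹' s := by
  rcases hΩ with ⟨R, -, rfl⟩ | ⟨r, R, -, -, rfl⟩
  · exact ⟨R, Iio R, isOpen_Iio, subset_rfl, by ext; simp⟩
  · exact ⟨R, Ioo r R, isOpen_Ioo, Ioo_subset_Iio_self, rfl⟩

lemma isOpen (hΩ : IsBallOrAnnulus Ω) : IsOpen Ω := by
  obtain ⟨-, s, hs, -, rfl⟩ := hΩ.exists_eq_preimage_norm
  exact hs.preimage continuous_norm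

lemma isCompact_closure (hΩ : IsBallOrAnnulus Ω) : IsCompact (closure Ω) := by
  obtain ⟨R, s, -, hsR, rfl⟩ := hΩ.exists_eq_preimage_norm
  refine (isCompact_closedBall (0 : EuclN N) R).of_isClosed_subset isClosed_closure
    (closure_minimal (fun x hx => ?_) Metric.isClosed_closedBall)
  simpa using (hsR hx).le

lemma integrableOn_of_continuousOn (hΩ : IsBallOrAnnulus Ω) {E : Type*} [NormedAddCommGroup E]
    {g : EuclN N → E} (hg : ContinuousOn g (closure Ω)) : IntegrableOn g Ω :=
  (hg.integrableOn_compact hΩ.isCompact_closure).mono_set subset_closure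

lemma preimage_reflPt (hΩ : IsBallOrAnnulus Ω) {e : EuclN N} (he : ‖e‖ = 1) :
    reflPt e ⁻¹' Ω = Ω := by
  obtain ⟨-, s, -, -, rfl⟩ := hΩ.exists_eq_preimage_norm
  ext x
  simp [norm_reflPt he]

end IsBallOrAnnulus

noncomputable def moment {N : ℕ} (Ω : Set (EuclN N)) (w : EuclN N → ℝ) : EuclN N :=
  ∫ x in Ω, w x • x

lemma inner_moment {N : ℕ} {Ω : Set (EuclN N)} {w : EuclN N → ℝ}
    (hw : IntegrableOn (fun x => w x • x) Ω) (e : EuclN N) :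
    ⟪moment Ω w, e⟫ = ∫ x in Ω, w x * ⟪x, e⟫ := by
  rw [moment, real_inner_comm, ← integral_inner hw e]
  simp_rw [real_inner_smul_right, real_inner_comm e]

lemma reflPt_le_of_setIntegral_sum_mul_inner_nonneg {N m : ℕ} {Ω : Set (EuclN N)} {e : EuclN N}
    (he : ‖e‖ = 1) (hΩo : IsOpen Ω) (hΩ : reflPt e ⁻¹' Ω = Ω) {U : Fin m → EuclN N → ℝ}
    (hUc : ∀ i, ContinuousOn (U i) Ω)
    (hint : IntegrableOn (fun x => (∑ i, U i x) * ⟪x, e⟫) Ω)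
    (hrefl : (∀ i, ∀ x ∈ halfDom Ω e, U i (reflPt e x) ≤ U i x) ∨
      (∀ i, ∀ x ∈ halfDom Ω e, U i x ≤ U i (reflPt e x)))
    (hmom : 0 ≤ ∫ x in Ω, (∑ i, U i x) * ⟪x, e⟫) :
    ∀ i, ∀ x ∈ halfDom Ω e, U i (reflPt e x) ≤ U i x := by
  rcases hrefl with hge | hle
  · exact hge
  intro i x hx
  have hsum := comp_reflPt_eq_of_le he hΩo hΩ (continuousOn_finsetSum _ fun i _ => hUc i) hint
    (fun y hy => Finset.sum_le_sum fun j _ => hle j y hy) hmom x hx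
  exact ((Finset.sum_eq_sum_iff_of_le fun j _ => hle j x hx).1 hsum.symm i
    (Finset.mem_univ i)).symm.le

theorem statement16_general
    {N m : ℕ} (hN : 2 ≤ N)
    (Ω : Set (EuclN N)) (hΩ : IsBallOrAnnulus Ω)
    (U : Fin m → EuclN N → ℝ)
    (hUreg : ∀ i, ContDiffOn ℝ 2 (U i) Ω ∧ ContinuousOn (U i) (closure Ω))
    (hrefl : ∀ e : EuclN N, ‖e‖ = 1 →
      (∀ i, ∀ x ∈ halfDom Ω e, U i (reflPt e x) ≤ U i x) ∨
      (∀ i, ∀ x ∈ halfDom Ω e, U i x ≤ U i (reflPt e x))) :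
    FoliatedSchwarz Ω U := by
  have : Nonempty (Fin N) := ⟨⟨0, by omega⟩⟩
  set W : EuclN N → ℝ := fun x => ∑ i, U i x
  have hWc : ContinuousOn W (closure Ω) := continuousOn_finsetSum _ fun i _ => (hUreg i).2
  refine foliatedSchwarz_of_forall_inner_nonneg (moment Ω W) fun e he hmom => ?_
  rw [inner_moment (hΩ.integrableOn_of_continuousOn (hWc.smul continuousOn_id))] at hmom
  exact reflPt_le_of_setIntegral_sum_mul_inner_nonneg he hΩ.isOpen (hΩ.preimage_reflPt he)
    (fun i => (hUreg i).2.mono subset_closure)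
    (hΩ.integrableOn_of_continuousOn (hWc.mul (by fun_prop)))
    (hrefl e he) hmom

/-- **Reflection comparison in every half-domain implies foliated Schwarz symmetry.** -/
theorem statement16
    {N m : ℕ} (hN : 2 ≤ N) (hm : 2 ≤ m)
    (Ω : Set (EuclN N)) (hΩ : IsBallOrAnnulus Ω)
    (f : Fin m → ℝ → (Fin m → ℝ) → ℝ)
    (hf : ∀ i, ContDiff ℝ 1 (fun q : ℝ × (Fin m → ℝ) => f i q.1 q.2))
    (U : Fin m → EuclN N → ℝ)
    (hUreg : ∀ i, ContDiffOn ℝ 2 (U i) Ω ∧ ContinuousOn (U i) (closure Ω))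
    (hsol : IsSolution Ω f U)
    (hcoup : ∀ e : EuclN N, ‖e‖ = 1 → FullyCoupledAlong f U (halfDom Ω e))
    (hrefl : ∀ e : EuclN N, ‖e‖ = 1 →
      (∀ i, ∀ x ∈ halfDom Ω e, U i (reflPt e x) ≤ U i x) ∨
      (∀ i, ∀ x ∈ halfDom Ω e, U i x ≤ U i (reflPt e x))) :
    FoliatedSchwarz Ω U :=
  statement16_general hN Ω hΩ U hUreg hrefl
end
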